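/- arXiv:1109.6663 — 7 statements merged into one kernel-verified Lean document; each statement's English description precedes it below -/
import Mathlib

section
/- Let f be a holomorphic function on the open unit disk 𝔻 ⊂ ℂ whose derivative is non-vanishing on 𝔻, and suppose that (1 − |z|²)² · |S f(z)| ≤ 2 for every z ∈ 𝔻, where S f is the Schwarzian derivative of f. Then f is injective on 𝔻. (This is the 'contains the ball of radius 2' half of the Nehari-type theorem used in the paper, expressed analytically via the Schwarzian derivative.) -/
/-!
Suppose `f a = f b` with `a ≠ b`. A disk automorphism `T` with `T 0 = a` and `T r = b`, `0 < r < 1`,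
preserves the hypotheses, because `S (f ∘ T) = (S f ∘ T) T'²` and `1 - |T z|² = |T' z| (1 - |z|²)`.
For `g = f ∘ T`, the function `Y = (g - g 0) / √g'` solves `Y'' + (S g / 2) Y = 0`, so on the
real axis its modulus `v` satisfies `v'' + v / (1 - t²)² ≥ 0`, and `v` vanishes at `0` and at the
first return `β ≤ r` of `g` to `g 0`. By Sturm comparison this is impossible, because
`u = √(1 - t²)` is a positive solution of `u'' + u / (1 - t²)² = 0` on `[0, β]`.
-/

open Set Metric

/-- The Schwarzian derivative of a holomorphic function `f`:
`S f(z) = f'''(z)/f'(z) - (3/2) (f''(z)/f'(z))^2`. -/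
noncomputable def schwarzian (f : ℂ → ℂ) (z : ℂ) : ℂ :=
  iteratedDeriv 3 f z / deriv f z - (3 / 2) * (iteratedDeriv 2 f z / deriv f z) ^ 2

open Filter Topology ComplexConjugate
open Complex (normSq)
open scoped InnerProductSpace

lemma schwarzian_eq_deriv (F : ℂ → ℂ) (z : ℂ) :
    schwarzian F z =
      deriv (deriv (deriv F)) z / deriv F z - 3 / 2 * (deriv (deriv F) z / deriv F z) ^ 2 := by
  simp only [schwarzian, iteratedDeriv_eq_iterate, Function.iterate_succ_apply,
    Function.iterate_zero_apply]

lemma schwarzian_eq_of_hasDerivAt {s : Set ℂ} (hs : IsOpen s) {F F₁ F₂ F₃ : ℂ → ℂ}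
    (h₁ : ∀ z ∈ s, HasDerivAt F (F₁ z) z) (h₂ : ∀ z ∈ s, HasDerivAt F₁ (F₂ z) z)
    (h₃ : ∀ z ∈ s, HasDerivAt F₂ (F₃ z) z) {z : ℂ} (hz : z ∈ s) :
    schwarzian F z = F₃ z / F₁ z - 3 / 2 * (F₂ z / F₁ z) ^ 2 := by
  have e₁ : EqOn (deriv F) F₁ s := fun w hw ↦ (h₁ w hw).deriv
  have e₂ : EqOn (deriv (deriv F)) F₂ s := fun w hw ↦ (e₁.deriv hs hw).trans (h₂ w hw).deriv
  have e₃ : EqOn (deriv (deriv (deriv F))) F₃ s := fun w hw ↦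
    (e₂.deriv hs hw).trans (h₃ w hw).deriv
  rw [schwarzian_eq_deriv, e₁ hz, e₂ hz, e₃ hz]

theorem schwarzian_comp {s t : Set ℂ} (hs : IsOpen s) (ht : IsOpen t) {f T : ℂ → ℂ}
    (hf : DifferentiableOn ℂ f s) (hT : DifferentiableOn ℂ T t) (hTst : MapsTo T t s)
    {z : ℂ} (hz : z ∈ t) (hf' : deriv f (T z) ≠ 0) (hT' : deriv T z ≠ 0) :
    schwarzian (f ∘ T) z = schwarzian f (T z) * deriv T z ^ 2 + schwarzian T z := by
  have hfa := hf.analyticOnNhd hs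
  have hTa := hT.analyticOnNhd ht
  set f₁ := deriv f
  set f₂ := deriv f₁
  set f₃ := deriv f₂
  set T₁ := deriv T
  set T₂ := deriv T₁
  set T₃ := deriv T₂
  have hf₁ : ∀ w ∈ s, HasDerivAt f (f₁ w) w := fun w hw ↦ (hfa w hw).differentiableAt.hasDerivAt
  have hf₂ : ∀ w ∈ s, HasDerivAt f₁ (f₂ w) w := fun w hw ↦
    (hfa.deriv w hw).differentiableAt.hasDerivAt
  have hf₃ : ∀ w ∈ s, HasDerivAt f₂ (f₃ w) w := fun w hw ↦
    (hfa.deriv.deriv w hw).differentiableAt.hasDerivAt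
  have hT₁ : ∀ w ∈ t, HasDerivAt T (T₁ w) w := fun w hw ↦ (hTa w hw).differentiableAt.hasDerivAt
  have hT₂ : ∀ w ∈ t, HasDerivAt T₁ (T₂ w) w := fun w hw ↦
    (hTa.deriv w hw).differentiableAt.hasDerivAt
  have hT₃ : ∀ w ∈ t, HasDerivAt T₂ (T₃ w) w := fun w hw ↦
    (hTa.deriv.deriv w hw).differentiableAt.hasDerivAt
  have hc₁ : ∀ w ∈ t, HasDerivAt (f ∘ T) (f₁ (T w) * T₁ w) w := fun w hw ↦
    (hf₁ _ (hTst hw)).comp w (hT₁ w hw)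
  have hc₂ : ∀ w ∈ t, HasDerivAt (fun u ↦ f₁ (T u) * T₁ u)
      (f₂ (T w) * T₁ w * T₁ w + f₁ (T w) * T₂ w) w := fun w hw ↦
    ((hf₂ _ (hTst hw)).comp w (hT₁ w hw)).mul (hT₂ w hw)
  have hc₃ : ∀ w ∈ t, HasDerivAt (fun u ↦ f₂ (T u) * T₁ u * T₁ u + f₁ (T u) * T₂ u)
      (f₃ (T w) * T₁ w ^ 3 + 3 * f₂ (T w) * T₁ w * T₂ w + f₁ (T w) * T₃ w) w := by
    intro w hw
    have hA : HasDerivAt (fun u ↦ f₂ (T u) * T₁ u * T₁ u)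
        ((f₃ (T w) * T₁ w * T₁ w + f₂ (T w) * T₂ w) * T₁ w + f₂ (T w) * T₁ w * T₂ w) w :=
      (((hf₃ _ (hTst hw)).comp w (hT₁ w hw)).mul (hT₂ w hw)).mul (hT₂ w hw)
    have hB : HasDerivAt (fun u ↦ f₁ (T u) * T₂ u) (f₂ (T w) * T₁ w * T₂ w + f₁ (T w) * T₃ w) w :=
      ((hf₂ _ (hTst hw)).comp w (hT₁ w hw)).mul (hT₃ w hw)
    exact (hA.add hB).congr_deriv (by ring)
  rw [schwarzian_eq_of_hasDerivAt ht hc₁ hc₂ hc₃ hz, schwarzian_eq_of_hasDerivAt hs hf₁ hf₂ hf₃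
    (hTst hz), schwarzian_eq_of_hasDerivAt ht hT₁ hT₂ hT₃ hz]
  field_simp
  ring

lemma hasDerivAt_div_one_sub_mul_pow (D k : ℂ) (n : ℕ) {z : ℂ} (hz : 1 - k * z ≠ 0) :
    HasDerivAt (fun w ↦ D / (1 - k * w) ^ n) (n * k * D / (1 - k * z) ^ (n + 1)) z := by
  have h : HasDerivAt (fun w ↦ (1 - k * w) ^ n) (n * (1 - k * z) ^ (n - 1) * -(k * 1)) z :=
    (((hasDerivAt_id' z).const_mul k).const_sub 1).pow n
  refine ((hasDerivAt_const z D).div h (pow_ne_zero n hz)).congr_deriv ?_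
  rcases n with _ | m
  · simp
  · simp only [Nat.cast_add, Nat.cast_one, add_tsub_cancel_right, mul_one]
    field_simp
    ring

noncomputable def diskMoebius (a e z : ℂ) : ℂ := (a - e * z) / (1 - conj a * (e * z))

section diskMoebius

variable {a e z : ℂ}

lemma hasDerivAt_diskMoebius (hz : 1 - conj a * (e * z) ≠ 0) :
    HasDerivAt (diskMoebius a e) (e * (a * conj a - 1) / (1 - conj a * (e * z)) ^ 2) z := by
  have hnum := ((hasDerivAt_id' z).const_mul e).const_sub a
  have hden := (((hasDerivAt_id' z).const_mul e).const_mul (conj a)).const_sub 1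
  refine (hnum.div hden hz).congr_deriv ?_
  field_simp
  ring

lemma schwarzian_diskMoebius (hz : 1 - conj a * (e * z) ≠ 0) :
    schwarzian (diskMoebius a e) z = 0 := by
  set k := conj a * e
  set D := e * (a * conj a - 1)
  have hk : ∀ w, 1 - conj a * (e * w) = 1 - k * w := fun w ↦ by ring
  have hs : IsOpen {w : ℂ | 1 - k * w ≠ 0} :=
    isOpen_ne_fun (by fun_prop) continuous_const
  have h₁ : ∀ w ∈ {w : ℂ | 1 - k * w ≠ 0},
      HasDerivAt (diskMoebius a e) (D / (1 - k * w) ^ 2) w := fun w hw ↦ by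
    rw [← hk]; exact hasDerivAt_diskMoebius (by rwa [hk])
  have h₂ : ∀ w ∈ {w : ℂ | 1 - k * w ≠ 0}, HasDerivAt (fun w ↦ D / (1 - k * w) ^ 2)
      (2 * k * D / (1 - k * w) ^ 3) w := fun w hw ↦ by
    simpa using hasDerivAt_div_one_sub_mul_pow D k 2 hw
  have h₃ : ∀ w ∈ {w : ℂ | 1 - k * w ≠ 0}, HasDerivAt (fun w ↦ 2 * k * D / (1 - k * w) ^ 3)
      (3 * k * (2 * k * D) / (1 - k * w) ^ 4) w := fun w hw ↦ by
    simpa using hasDerivAt_div_one_sub_mul_pow (2 * k * D) k 3 hw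
  have hz' : 1 - k * z ≠ 0 := by rwa [← hk]
  rw [schwarzian_eq_of_hasDerivAt hs h₁ h₂ h₃ hz']
  rcases eq_or_ne D 0 with hD | hD
  · simp [hD]
  · field_simp
    ring

lemma one_sub_conj_mul_ne_zero (ha : ‖a‖ < 1) (hz : ‖z‖ < 1) : 1 - conj a * z ≠ 0 := by
  have : ‖conj a * z‖ < 1 := by
    rw [norm_mul, Complex.norm_conj]
    nlinarith [norm_nonneg a, norm_nonneg z]
  intro h
  rw [← sub_eq_zero.1 h, norm_one] at this
  exact this.false

lemma diskMoebius_denom_ne_zero (ha : ‖a‖ < 1) (he : ‖e‖ = 1) (hz : ‖z‖ < 1) :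
    1 - conj a * (e * z) ≠ 0 :=
  one_sub_conj_mul_ne_zero ha (by rwa [norm_mul, he, one_mul])

lemma normSq_diskMoebius_denom_sub_normSq_num (he : ‖e‖ = 1) :
    normSq (1 - conj a * (e * z)) - normSq (a - e * z) = (1 - normSq a) * (1 - normSq z) := by
  have he' : e * conj e = 1 := by
    rw [Complex.mul_conj, ← Complex.sq_norm, he]; norm_num
  have key : (1 - conj a * (e * z)) * conj (1 - conj a * (e * z)) - (a - e * z) * conj (a - e * z)
      = (1 - a * conj a) * (1 - z * conj z) := by
    simp only [map_sub, map_mul, map_one, Complex.conj_conj]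
    linear_combination (z * conj z * (a * conj a - 1)) * he'
  simp only [Complex.mul_conj] at key
  exact_mod_cast key

lemma norm_deriv_diskMoebius (ha : ‖a‖ < 1) (he : ‖e‖ = 1) (hz : ‖z‖ < 1) :
    ‖deriv (diskMoebius a e) z‖ = (1 - normSq a) / normSq (1 - conj a * (e * z)) := by
  rw [(hasDerivAt_diskMoebius (diskMoebius_denom_ne_zero ha he hz)).deriv, norm_div, norm_mul,
    he, one_mul, norm_pow, Complex.sq_norm, Complex.mul_conj, ← Complex.ofReal_one,
    ← Complex.ofReal_sub, Complex.norm_real, Real.norm_of_nonpos, neg_sub]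
  rw [sub_nonpos, ← Complex.sq_norm]
  nlinarith [norm_nonneg a]

lemma one_sub_norm_sq_diskMoebius (ha : ‖a‖ < 1) (he : ‖e‖ = 1) (hz : ‖z‖ < 1) :
    1 - ‖diskMoebius a e z‖ ^ 2 = ‖deriv (diskMoebius a e) z‖ * (1 - ‖z‖ ^ 2) := by
  have hd : normSq (1 - conj a * (e * z)) ≠ 0 :=
    Complex.normSq_eq_zero.not.2 (diskMoebius_denom_ne_zero ha he hz)
  rw [norm_deriv_diskMoebius ha he hz, Complex.sq_norm, Complex.sq_norm, diskMoebius,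
    Complex.normSq_div, div_mul_eq_mul_div, ← normSq_diskMoebius_denom_sub_normSq_num he,
    one_sub_div hd]

lemma mapsTo_diskMoebius (ha : ‖a‖ < 1) (he : ‖e‖ = 1) :
    MapsTo (diskMoebius a e) (ball 0 1) (ball 0 1) := by
  intro z hz
  rw [mem_ball_zero_iff] at hz ⊢
  have hd := diskMoebius_denom_ne_zero ha he hz
  have h : 0 < 1 - ‖diskMoebius a e z‖ ^ 2 := by
    rw [one_sub_norm_sq_diskMoebius ha he hz, norm_deriv_diskMoebius ha he hz]
    have : normSq a < 1 := by rw [← Complex.sq_norm]; nlinarith [norm_nonneg a]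
    have : ‖z‖ ^ 2 < 1 := by nlinarith [norm_nonneg z]
    have := Complex.normSq_pos.2 hd
    apply mul_pos <;> [apply div_pos; skip] <;> linarith
  nlinarith [norm_nonneg (diskMoebius a e z)]

lemma deriv_diskMoebius_ne_zero (ha : ‖a‖ < 1) (he : ‖e‖ = 1) (hz : ‖z‖ < 1) :
    deriv (diskMoebius a e) z ≠ 0 := by
  rw [← norm_ne_zero_iff, norm_deriv_diskMoebius ha he hz]
  have : normSq a < 1 := by rw [← Complex.sq_norm]; nlinarith [norm_nonneg a]
  exact div_ne_zero (by linarith)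
    (Complex.normSq_eq_zero.not.2 (diskMoebius_denom_ne_zero ha he hz))

lemma diskMoebius_zero : diskMoebius a e 0 = a := by simp [diskMoebius]

lemma diskMoebius_one_involutive (ha : ‖a‖ < 1) (hz : ‖z‖ < 1) :
    diskMoebius a 1 (diskMoebius a 1 z) = z := by
  have hd := one_sub_conj_mul_ne_zero ha hz
  have hd' : 1 - z * conj a ≠ 0 := by rwa [mul_comm]
  have ha' : 1 - conj a * a ≠ 0 := one_sub_conj_mul_ne_zero ha ha
  simp only [diskMoebius, one_mul]
  rw [show a - (a - z) / (1 - conj a * z) = z * (1 - conj a * a) / (1 - conj a * z) by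
      field_simp; ring,
    show 1 - conj a * ((a - z) / (1 - conj a * z)) = (1 - conj a * a) / (1 - conj a * z) by
      field_simp; ring]
  field_simp

lemma exists_diskMoebius_ofReal_eq {b : ℂ} (ha : ‖a‖ < 1) (hb : ‖b‖ < 1) (hab : a ≠ b) :
    ∃ e : ℂ, ∃ r : ℝ, ‖e‖ = 1 ∧ r ∈ Ioo 0 1 ∧ diskMoebius a e r = b := by
  set w := diskMoebius a 1 b
  have hw : ‖w‖ < 1 :=
    mem_ball_zero_iff.1 (mapsTo_diskMoebius ha norm_one (mem_ball_zero_iff.2 hb))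
  have hw0 : w ≠ 0 := fun h ↦ hab <| calc
    a = diskMoebius a 1 0 := diskMoebius_zero.symm
    _ = b := by rw [← h, diskMoebius_one_involutive ha hb]
  refine ⟨w / ‖w‖, ‖w‖, ?_, ⟨norm_pos_iff.2 hw0, hw⟩, ?_⟩
  · rw [norm_div, Complex.norm_real, norm_norm, div_self (norm_ne_zero_iff.2 hw0)]
  · have : w / ‖w‖ * ‖w‖ = w := div_mul_cancel₀ _ (by exact_mod_cast norm_ne_zero_iff.2 hw0)
    have h1 : diskMoebius a (w / ‖w‖) ‖w‖ = diskMoebius a 1 w := by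
      simp only [diskMoebius, one_mul, this]
    rw [h1, diskMoebius_one_involutive ha hb]

lemma differentiableOn_diskMoebius (ha : ‖a‖ < 1) (he : ‖e‖ = 1) :
    DifferentiableOn ℂ (diskMoebius a e) (ball 0 1) := fun _ hz ↦
  (hasDerivAt_diskMoebius (diskMoebius_denom_ne_zero ha he (mem_ball_zero_iff.1 hz)))
    |>.differentiableAt.differentiableWithinAt

lemma one_sub_norm_sq_sq_mul_norm_schwarzian_comp_diskMoebius {f : ℂ → ℂ}
    (hf : DifferentiableOn ℂ f (ball 0 1)) (ha : ‖a‖ < 1) (he : ‖e‖ = 1) (hz : ‖z‖ < 1)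
    (hf' : deriv f (diskMoebius a e z) ≠ 0) :
    (1 - ‖z‖ ^ 2) ^ 2 * ‖schwarzian (f ∘ diskMoebius a e) z‖ =
      (1 - ‖diskMoebius a e z‖ ^ 2) ^ 2 * ‖schwarzian f (diskMoebius a e z)‖ := by
  rw [schwarzian_comp isOpen_ball isOpen_ball hf (differentiableOn_diskMoebius ha he)
      (mapsTo_diskMoebius ha he) (mem_ball_zero_iff.2 hz) hf' (deriv_diskMoebius_ne_zero ha he hz),
    schwarzian_diskMoebius (diskMoebius_denom_ne_zero ha he hz), add_zero, norm_mul, norm_pow,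
    one_sub_norm_sq_diskMoebius ha he hz]
  ring

lemma deriv_comp_diskMoebius_ne_zero {f : ℂ → ℂ} (hf : DifferentiableOn ℂ f (ball 0 1))
    (ha : ‖a‖ < 1) (he : ‖e‖ = 1) (hz : ‖z‖ < 1) (hf' : deriv f (diskMoebius a e z) ≠ 0) :
    deriv (f ∘ diskMoebius a e) z ≠ 0 := by
  have hz' := mem_ball_zero_iff.2 hz
  rw [deriv_comp z (hf.differentiableAt (isOpen_ball.mem_nhds (mapsTo_diskMoebius ha he hz')))
    ((differentiableOn_diskMoebius ha he).differentiableAt (isOpen_ball.mem_nhds hz'))]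
  exact mul_ne_zero hf' (deriv_diskMoebius_ne_zero ha he hz)

end diskMoebius

lemma exists_sq_mul_eq_one_hasDerivAt {F F' : ℂ → ℂ} {x : ℂ}
    (hF : ∀ᶠ z in 𝓝 x, HasDerivAt F (F' z) z) (hx : F x ≠ 0) :
    ∃ h : ℂ → ℂ, ∀ᶠ z in 𝓝 x, h z ^ 2 * F z = 1 ∧ HasDerivAt h (-(F' z / (2 * F z)) * h z) z := by
  set d := F x
  have hslit : ∀ᶠ z in 𝓝 x, F z / d ∈ Complex.slitPlane := by
    refine (hF.self_of_nhds.continuousAt.div_const d).eventually_mem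
      (Complex.isOpen_slitPlane.mem_nhds ?_)
    rw [div_self hx]
    exact Complex.one_mem_slitPlane
  refine ⟨fun z ↦ Complex.exp (-(1 / 2) * Complex.log (F z / d)) *
    Complex.exp (-(1 / 2) * Complex.log d), ?_⟩
  filter_upwards [hF, hslit] with z hFz hz
  have hz0 : F z / d ≠ 0 := Complex.slitPlane_ne_zero hz
  have hFz0 : F z ≠ 0 := left_ne_zero_of_mul (by rwa [div_eq_mul_inv] at hz0)
  constructor
  · rw [mul_pow, ← Complex.exp_nat_mul, ← Complex.exp_nat_mul, ← Complex.exp_add,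
      show ((2 : ℕ) : ℂ) * (-(1 / 2) * Complex.log (F z / d)) +
          (2 : ℕ) * (-(1 / 2) * Complex.log d) = -(Complex.log (F z / d) + Complex.log d) by
        push_cast; ring,
      Complex.exp_neg, Complex.exp_add, Complex.exp_log hz0, Complex.exp_log hx,
      div_mul_cancel₀ _ hx, inv_mul_cancel₀ hFz0]
  · refine ((((hFz.div_const d).clog hz).const_mul (-(1 / 2))).cexp.mul_const _).congr_deriv ?_
    field_simp

/-- `Y = (g - c) / √g'`, for a local branch of the square root. -/
lemma exists_local_solution_schwarzian_ode {g : ℂ → ℂ} {x : ℂ} (c : ℂ) (hg : AnalyticAt ℂ g x)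
    (hg' : deriv g x ≠ 0) :
    ∃ Y Y₁ : ℂ → ℂ, ∀ᶠ z in 𝓝 x, ‖Y z‖ = ‖g z - c‖ / √‖deriv g z‖ ∧
      HasDerivAt Y (Y₁ z) z ∧ HasDerivAt Y₁ (-(schwarzian g z / 2) * Y z) z := by
  have hga : ∀ᶠ z in 𝓝 x, AnalyticAt ℂ g z := hg.eventually_analyticAt
  set g₁ := deriv g with hg₁
  set g₂ := deriv g₁ with hg₂
  set g₃ := deriv g₂ with hg₃
  obtain ⟨h, hh⟩ := exists_sq_mul_eq_one_hasDerivAt (F := g₁) (F' := g₂)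
    (hga.mono fun z hz ↦ hz.deriv.differentiableAt.hasDerivAt) hg'
  set κ : ℂ → ℂ := fun z ↦ -(g₂ z / (2 * g₁ z))
  refine ⟨fun z ↦ (g z - c) * h z, fun z ↦ g₁ z * h z + (g z - c) * (κ z * h z), ?_⟩
  filter_upwards [hga, hh] with z hz ⟨hsq, hhz⟩
  have hg₁z : g₁ z ≠ 0 := right_ne_zero_of_mul_eq_one hsq
  have d₁ : HasDerivAt g (g₁ z) z := hz.differentiableAt.hasDerivAt
  have d₂ : HasDerivAt g₁ (g₂ z) z := hz.deriv.differentiableAt.hasDerivAt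
  have d₃ : HasDerivAt g₂ (g₃ z) z := hz.deriv.deriv.differentiableAt.hasDerivAt
  have dκ : HasDerivAt κ (-((g₃ z * (2 * g₁ z) - g₂ z * (2 * g₂ z)) / (2 * g₁ z) ^ 2)) z :=
    (d₃.div (d₂.const_mul 2) (mul_ne_zero two_ne_zero hg₁z)).neg
  refine ⟨?_, (d₁.sub_const c).mul hhz, ?_⟩
  · have hnorm : ‖h z‖ * √‖g₁ z‖ = 1 := by
      rw [← Real.sqrt_sq (mul_nonneg (norm_nonneg _) (Real.sqrt_nonneg _)), mul_pow,
        Real.sq_sqrt (norm_nonneg _), ← norm_pow, ← norm_mul, hsq, norm_one, Real.sqrt_one]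
    rw [norm_mul, eq_div_iff (right_ne_zero_of_mul_eq_one hnorm), mul_assoc, hnorm, mul_one]
  · refine ((d₂.mul hhz).add ((d₁.sub_const c).mul (dκ.mul hhz))).congr_deriv ?_
    rw [schwarzian_eq_deriv, ← hg₁, ← hg₂, ← hg₃]
    simp only [κ, Pi.mul_apply]
    field_simp
    ring

theorem HasDerivAt.norm {F : Type*} [NormedAddCommGroup F] [InnerProductSpace ℝ F] {f : ℝ → F}
    {f' : F} {x : ℝ} (hf : HasDerivAt f f' x) (h0 : f x ≠ 0) :
    HasDerivAt (fun t ↦ ‖f t‖) (⟪f x, f'⟫_ℝ / ‖f x‖) x := by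
  have h := hf.norm_sq.sqrt (by positivity)
  simp only [Real.sqrt_sq (norm_nonneg _)] at h
  refine h.congr_deriv ?_
  have : ‖f x‖ ≠ 0 := norm_ne_zero_iff.2 h0
  field_simp

/-- By Cauchy–Schwarz, `|y| |y|'' = |y'|² - ⟪y, y'⟫² / |y|² - Re p |y|² ≥ -Re p |y|²`. -/
lemma neg_re_mul_norm_le_deriv_deriv_norm {y y₁ : ℝ → ℂ} {p : ℂ} {t : ℝ}
    (hy : ∀ᶠ s in 𝓝 t, HasDerivAt y (y₁ s) s) (hy₁ : HasDerivAt y₁ (-p * y t) t) (ht : y t ≠ 0) :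
    DifferentiableAt ℝ (fun s ↦ ‖y s‖) t ∧ DifferentiableAt ℝ (deriv fun s ↦ ‖y s‖) t ∧
      -p.re * ‖y t‖ ≤ deriv (deriv fun s ↦ ‖y s‖) t := by
  have hne : ∀ᶠ s in 𝓝 t, y s ≠ 0 := hy.self_of_nhds.continuousAt.eventually_ne ht
  have hN : ∀ᶠ s in 𝓝 t, HasDerivAt (fun s ↦ ‖y s‖) (⟪y s, y₁ s⟫_ℝ / ‖y s‖) s := by
    filter_upwards [hy, hne] with s hys hs
    exact hys.norm hs
  have hN' : deriv (fun s ↦ ‖y s‖) =ᶠ[𝓝 t] fun s ↦ ⟪y s, y₁ s⟫_ℝ / ‖y s‖ :=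
    hN.mono fun s hs ↦ hs.deriv
  have hN₂ := (((hy.self_of_nhds.inner ℝ hy₁).div (hy.self_of_nhds.norm ht)
    (norm_ne_zero_iff.2 ht))).congr_of_eventuallyEq hN'
  refine ⟨hN.self_of_nhds.differentiableAt, hN₂.differentiableAt, ?_⟩
  rw [hN₂.deriv]
  have hpos : 0 < ‖y t‖ := norm_pos_iff.2 ht
  have hp : ⟪y t, -p * y t⟫_ℝ = -p.re * ‖y t‖ ^ 2 := by
    rw [Complex.inner, mul_assoc, Complex.mul_conj, ← Complex.sq_norm,
      Complex.re_mul_ofReal, Complex.neg_re]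
  have hcs : ⟪y t, y₁ t⟫_ℝ * ⟪y t, y₁ t⟫_ℝ ≤ ‖y t‖ ^ 2 * ‖y₁ t‖ ^ 2 := by
    simpa only [real_inner_self_eq_norm_sq] using real_inner_mul_inner_self_le (y t) (y₁ t)
  rw [hp, real_inner_self_eq_norm_sq, le_div_iff₀ (by positivity)]
  have : ⟪y t, y₁ t⟫_ℝ * (⟪y t, y₁ t⟫_ℝ / ‖y t‖) ≤ ‖y t‖ * ‖y₁ t‖ ^ 2 := by
    rw [mul_div_assoc', div_le_iff₀ hpos]
    linarith
  nlinarith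

/-- On the real axis, the modulus of the solution `(g - c) / √g'` of `Y'' + (S g / 2) Y = 0`. -/
noncomputable def nehariAmplitude (g : ℂ → ℂ) (c : ℂ) (t : ℝ) : ℝ := ‖g t - c‖ / √‖deriv g t‖

lemma nehariAmplitude_subsolution {g : ℂ → ℂ} {c : ℂ} {x : ℝ} (hg : AnalyticAt ℂ g x)
    (hg' : deriv g x ≠ 0) (hx : g x ≠ c) :
    DifferentiableAt ℝ (nehariAmplitude g c) x ∧
      DifferentiableAt ℝ (deriv (nehariAmplitude g c)) x ∧
      -((schwarzian g x).re / 2) * nehariAmplitude g c x ≤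
        deriv (deriv (nehariAmplitude g c)) x := by
  obtain ⟨Y, Y₁, hY⟩ := exists_local_solution_schwarzian_ode c hg hg'
  have hY' := Complex.continuous_ofReal.continuousAt.eventually hY
  have hvY : nehariAmplitude g c =ᶠ[𝓝 x] fun s ↦ ‖Y s‖ := hY'.mono fun s hs ↦ hs.1.symm
  have hYx : Y x ≠ 0 := by
    rw [← norm_ne_zero_iff, hY'.self_of_nhds.1]
    exact div_ne_zero (norm_ne_zero_iff.2 (sub_ne_zero.2 hx))
      (Real.sqrt_ne_zero'.2 (norm_pos_iff.2 hg'))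
  obtain ⟨h₁, h₂, h₃⟩ := neg_re_mul_norm_le_deriv_deriv_norm
    (hY'.mono fun s hs ↦ hs.2.1.comp_ofReal) hY'.self_of_nhds.2.2.comp_ofReal hYx
  have hd := hvY.deriv
  refine ⟨hvY.differentiableAt_iff.2 h₁, hd.differentiableAt_iff.2 h₂, ?_⟩
  rw [hd.deriv_eq, hvY.self_of_nhds]
  simpa [Complex.div_ofNat_re] using h₃

lemma hasDerivAt_sqrt_one_sub_sq {t : ℝ} (ht : t ^ 2 < 1) :
    HasDerivAt (fun s ↦ √(1 - s ^ 2)) (-t / √(1 - t ^ 2)) t := by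
  have h := ((hasDerivAt_pow 2 t).const_sub 1).sqrt (by linarith)
  refine h.congr_deriv ?_
  field_simp
  norm_num

lemma hasDerivAt_neg_div_sqrt_one_sub_sq {t : ℝ} (ht : t ^ 2 < 1) :
    HasDerivAt (fun s ↦ -s / √(1 - s ^ 2)) (-((1 - t ^ 2) ^ 2)⁻¹ * √(1 - t ^ 2)) t := by
  have hs : 0 < √(1 - t ^ 2) := Real.sqrt_pos.2 (by linarith)
  have hs2 : √(1 - t ^ 2) ^ 2 = 1 - t ^ 2 := Real.sq_sqrt (by linarith)
  refine ((hasDerivAt_neg t).div (hasDerivAt_sqrt_one_sub_sq ht) hs.ne').congr_deriv ?_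
  have : (1 - t ^ 2) ≠ 0 := by linarith
  field_simp
  rw [show √(1 - t ^ 2) ^ 4 = (√(1 - t ^ 2) ^ 2) ^ 2 by ring, hs2]
  ring

theorem sturm_comparison {α β : ℝ} (hαβ : α < β) {q u u' v v' v'' : ℝ → ℝ}
    (hu : ContinuousOn u (Icc α β)) (hu_pos : ∀ t ∈ Icc α β, 0 < u t)
    (hu' : ∀ t ∈ Ioo α β, HasDerivAt u (u' t) t)
    (hu'' : ∀ t ∈ Ioo α β, HasDerivAt u' (-q t * u t) t)
    (hv : ContinuousOn v (Icc α β)) (hvα : v α = 0) (hvβ : v β = 0)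
    (hv_pos : ∀ t ∈ Ioo α β, 0 < v t) (hv' : ∀ t ∈ Ioo α β, HasDerivAt v (v' t) t)
    (hv'' : ∀ t ∈ Ioo α β, HasDerivAt v' (v'' t) t) (hsub : ∀ t ∈ Ioo α β, -q t * v t ≤ v'' t) :
    False := by
  set W : ℝ → ℝ := fun t ↦ v' t * u t - v t * u' t
  have hW : ∀ t ∈ Ioo α β, HasDerivAt W ((v'' t + q t * v t) * u t) t := fun t ht ↦
    (((hv'' t ht).mul (hu' t ht)).sub ((hv' t ht).mul (hu'' t ht))).congr_deriv (by ring)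
  have hW_mono : MonotoneOn W (Ioo α β) :=
    monotoneOn_of_hasDerivWithinAt_nonneg (convex_Ioo α β)
      (fun t ht ↦ (hW t ht).continuousAt.continuousWithinAt)
      (fun t ht ↦ (hW t (interior_subset ht)).hasDerivWithinAt)
      (fun t ht ↦ mul_nonneg (by linarith [hsub t (interior_subset ht)])
        (hu_pos t (Ioo_subset_Icc_self (interior_subset ht))).le)
  set φ : ℝ → ℝ := fun t ↦ v t / u t
  have hφ : ContinuousOn φ (Icc α β) := hv.div hu fun t ht ↦ (hu_pos t ht).ne'
  have hφ' : ∀ t ∈ Ioo α β, HasDerivAt φ (W t / u t ^ 2) t := fun t ht ↦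
    (hv' t ht).div (hu' t ht) (hu_pos t (Ioo_subset_Icc_self ht)).ne'
  obtain ⟨ξ, hξ, hξmax⟩ := isCompact_Icc.exists_isMaxOn (nonempty_Icc.2 hαβ.le) hφ
  have hmid : (α + β) / 2 ∈ Ioo α β := ⟨by linarith, by linarith⟩
  have hφξ : 0 < φ ξ := (div_pos (hv_pos _ hmid) (hu_pos _ (Ioo_subset_Icc_self hmid))).trans_le
    (hξmax (Ioo_subset_Icc_self hmid))
  have hξ' : ξ ∈ Ioo α β := by
    refine ⟨hξ.1.lt_of_ne ?_, hξ.2.lt_of_ne ?_⟩ <;> rintro rfl <;> simp [φ, hvα, hvβ] at hφξ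
  -- `φ' = W / u²` vanishes at the interior maximum `ξ`, so `W ≤ 0` on `(α, ξ)` and `φ` decreases.
  have hWξ : W ξ = 0 := by
    have h := (hξmax.isLocalMax (Icc_mem_nhds hξ'.1 hξ'.2)).hasDerivAt_eq_zero (hφ' ξ hξ')
    simpa [(hu_pos ξ hξ).ne'] using h
  obtain ⟨c, hc, hslope⟩ := exists_hasDerivAt_eq_slope φ (fun t ↦ W t / u t ^ 2) hξ'.1
    (hφ.mono (Icc_subset_Icc_right hξ.2)) fun t ht ↦ hφ' t ⟨ht.1, ht.2.trans hξ'.2⟩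
  have hcI : c ∈ Ioo α β := ⟨hc.1, hc.2.trans hξ'.2⟩
  have hWc : W c ≤ 0 := hWξ ▸ hW_mono hcI hξ' hc.2.le
  have : (φ ξ - φ α) / (ξ - α) ≤ 0 := hslope ▸ div_nonpos_of_nonpos_of_nonneg hWc (sq_nonneg _)
  rw [show φ α = 0 by simp [φ, hvα], div_nonpos_iff] at this
  rcases this with ⟨-, h⟩ | ⟨h, -⟩ <;> linarith [hξ'.1]

lemma exists_first_return {E : Type*} [TopologicalSpace E] [T1Space E] {a b : ℝ} {F : ℝ → E}
    {c : E} (hab : a < b) (hF : ContinuousOn F (Icc a b)) (hne : ∀ᶠ t in 𝓝[>] a, F t ≠ c)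
    (hb : F b = c) : ∃ β ∈ Ioc a b, F β = c ∧ ∀ t ∈ Ioo a β, F t ≠ c := by
  obtain ⟨δ₀, hδ₀, hδ₀ne⟩ := mem_nhdsGT_iff_exists_Ioo_subset.1 hne
  set δ := min δ₀ b
  have hδ : a < δ := lt_min hδ₀ hab
  set S := Icc δ b ∩ F ⁻¹' {c}
  have hS : IsClosed S := (hF.mono (Icc_subset_Icc_left hδ.le)).preimage_isClosed_of_isClosed
    isClosed_Icc isClosed_singleton
  obtain ⟨β, ⟨⟨hδβ, hβb⟩, hβ⟩, hβmin⟩ := (isCompact_Icc.of_isClosed_subset hS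
    inter_subset_left).exists_isLeast ⟨b, ⟨min_le_right _ _, le_rfl⟩, hb⟩
  refine ⟨β, ⟨hδ.trans_le hδβ, hβb⟩, hβ, fun t ht hFt ↦ ?_⟩
  rcases lt_or_ge t δ with htδ | hδt
  · exact hδ₀ne ⟨ht.1, htδ.trans_le (min_le_left _ _)⟩ hFt
  · exact (hβmin ⟨⟨hδt, ht.2.le.trans hβb⟩, hFt⟩).not_gt ht.2

lemma ofReal_mem_ball_zero_one {t : ℝ} (ht : t ^ 2 < 1) : (t : ℂ) ∈ ball (0 : ℂ) 1 := by
  rwa [mem_ball_zero_iff, Complex.norm_real, Real.norm_eq_abs, ← sq_lt_one_iff_abs_lt_one]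

section unitDisk

variable {g : ℂ → ℂ} (hg : DifferentiableOn ℂ g (ball 0 1))
  (hg' : ∀ z ∈ ball (0 : ℂ) 1, deriv g z ≠ 0)
include hg hg'

lemma continuousOn_nehariAmplitude (c : ℂ) {a b : ℝ} (hab : ∀ t ∈ Icc a b, t ^ 2 < 1) :
    ContinuousOn (nehariAmplitude g c) (Icc a b) := by
  have hball : MapsTo (fun t : ℝ ↦ (t : ℂ)) (Icc a b) (ball 0 1) := fun t ht ↦
    ofReal_mem_ball_zero_one (hab t ht)
  have hcont := Complex.continuous_ofReal.continuousOn (s := Icc a b)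
  refine ((hg.continuousOn.comp hcont hball).sub continuousOn_const).norm.div
    ((hg.analyticOnNhd isOpen_ball).deriv.continuousOn.comp hcont hball).norm.sqrt
    fun t ht ↦ (Real.sqrt_pos.2 (norm_pos_iff.2 (hg' _ (hball ht)))).ne'

variable (hS : ∀ z ∈ ball (0 : ℂ) 1, (1 - ‖z‖ ^ 2) ^ 2 * ‖schwarzian g z‖ ≤ 2)
include hS

lemma nehariAmplitude_sturm_subsolution {c : ℂ} {t : ℝ} (ht : t ^ 2 < 1) (hne : g t ≠ c) :
    DifferentiableAt ℝ (nehariAmplitude g c) t ∧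
      DifferentiableAt ℝ (deriv (nehariAmplitude g c)) t ∧
      -((1 - t ^ 2) ^ 2)⁻¹ * nehariAmplitude g c t ≤ deriv (deriv (nehariAmplitude g c)) t := by
  have htb := ofReal_mem_ball_zero_one ht
  obtain ⟨h₁, h₂, h₃⟩ :=
    nehariAmplitude_subsolution (hg.analyticOnNhd isOpen_ball _ htb) (hg' _ htb) hne
  refine ⟨h₁, h₂, le_trans (mul_le_mul_of_nonneg_right ?_ ?_) h₃⟩
  · have hSt := hS _ htb
    rw [Complex.norm_real, Real.norm_eq_abs, sq_abs, ← le_div_iff₀' (by nlinarith),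
      div_eq_mul_inv] at hSt
    linarith [Complex.re_le_norm (schwarzian g t)]
  · exact div_nonneg (norm_nonneg _) (Real.sqrt_nonneg _)

theorem apply_ofReal_ne_apply_zero_of_schwarzian_bound {r : ℝ} (hr : r ∈ Ioo 0 1) :
    g r ≠ g 0 := by
  intro hgr
  have h0 : (0 : ℂ) ∈ ball 0 1 := mem_ball_self one_pos
  have hne : ∀ᶠ t : ℝ in 𝓝[>] 0, g t ≠ g 0 := by
    have hd : HasDerivAt g (deriv g 0) ((0 : ℝ) : ℂ) := by
      rw [Complex.ofReal_zero]
      exact (hg.analyticOnNhd isOpen_ball 0 h0).differentiableAt.hasDerivAt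
    exact (hd.comp_ofReal.eventually_ne (hg' 0 h0)).filter_mono
      (nhdsWithin_mono _ fun t ht ↦ ne_of_gt ht)
  have hsq : ∀ t ∈ Icc 0 r, t ^ 2 < 1 := fun t ht ↦ by nlinarith [ht.1, ht.2, hr.2]
  obtain ⟨β, ⟨hβ0, hβr⟩, hgβ, hfirst⟩ := exists_first_return (F := fun t : ℝ ↦ g t) hr.1
    (hg.continuousOn.comp Complex.continuous_ofReal.continuousOn
      fun t ht ↦ ofReal_mem_ball_zero_one (hsq t ht)) hne hgr
  have hsqβ : ∀ t ∈ Icc 0 β, t ^ 2 < 1 := fun t ht ↦ hsq t ⟨ht.1, ht.2.trans hβr⟩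
  have hsub : ∀ t ∈ Ioo 0 β, _ := fun t ht ↦
    nehariAmplitude_sturm_subsolution hg hg' hS (hsqβ t (Ioo_subset_Icc_self ht)) (hfirst t ht)
  refine sturm_comparison hβ0 (u := fun t ↦ √(1 - t ^ 2)) (v := nehariAmplitude g (g 0))
    (by fun_prop) (fun t ht ↦ Real.sqrt_pos.2 (by linarith [hsqβ t ht]))
    (fun t ht ↦ hasDerivAt_sqrt_one_sub_sq (hsqβ t (Ioo_subset_Icc_self ht)))
    (fun t ht ↦ hasDerivAt_neg_div_sqrt_one_sub_sq (hsqβ t (Ioo_subset_Icc_self ht)))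
    (continuousOn_nehariAmplitude hg hg' _ hsqβ) (by simp [nehariAmplitude])
    (by simp [nehariAmplitude, hgβ]) (fun t ht ↦ ?_) (fun t ht ↦ (hsub t ht).1.hasDerivAt)
    (fun t ht ↦ (hsub t ht).2.1.hasDerivAt) (fun t ht ↦ (hsub t ht).2.2)
  exact div_pos (norm_pos_iff.2 (sub_ne_zero.2 (hfirst t ht)))
    (Real.sqrt_pos.2 (norm_pos_iff.2 (hg' _ (ofReal_mem_ball_zero_one
      (hsqβ t (Ioo_subset_Icc_self ht))))))

end unitDisk

/-- Nehari-type theorem, "radius 2" half: if `f` is holomorphic on the open unit disk with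
nonvanishing derivative and `(1 - |z|²)² |S f(z)| ≤ 2` everywhere on the disk, then `f` is
injective on the disk. -/
theorem nehari_schwarzian_bound_injective (f : ℂ → ℂ)
    (hf : DifferentiableOn ℂ f (ball (0 : ℂ) 1))
    (hf' : ∀ z ∈ ball (0 : ℂ) 1, deriv f z ≠ 0)
    (hS : ∀ z ∈ ball (0 : ℂ) 1,
      (1 - ‖z‖ ^ 2) ^ 2 * ‖schwarzian f z‖ ≤ 2) :
    InjOn f (ball (0 : ℂ) 1) := by
  intro a ha b hb hab
  by_contra hne
  rw [mem_ball_zero_iff] at ha hb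
  obtain ⟨e, r, he, hr, rfl⟩ := exists_diskMoebius_ofReal_eq ha hb hne
  have hT := mapsTo_diskMoebius ha he
  refine apply_ofReal_ne_apply_zero_of_schwarzian_bound (g := f ∘ diskMoebius a e)
    (hf.comp (differentiableOn_diskMoebius ha he) hT) (fun z hz ↦ ?_) (fun z hz ↦ ?_) hr ?_
  · exact deriv_comp_diskMoebius_ne_zero hf ha he (mem_ball_zero_iff.1 hz) (hf' _ (hT hz))
  · rw [one_sub_norm_sq_sq_mul_norm_schwarzian_comp_diskMoebius hf ha he (mem_ball_zero_iff.1 hz)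
      (hf' _ (hT hz))]
    exact hS _ (hT hz)
  · simp [diskMoebius_zero, hab]
end

section
/- There exists a differentiable function y₀ : (0,∞) → ℝ satisfying the Riccati equation y₀'(r) = 1 − (1 + 2/r²)·y₀(r)² for all r > 0, such that 0 < y₀(r) < 1 for all r > 0 and y₀(r) → 0 as r → 0⁺. -/
/-!
The equation has the closed-form solution
`y₀(r) = r (r cosh r - sinh r) / ((r² + 1) sinh r - r cosh r)`.
That it solves the Riccati equation is a polynomial identity in `r`, `f = sinh r`, `g = cosh r`
which only uses `f' = g` and `g' = f`. Write `N` and `D` for its numerator and denominator.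
`N > 0` because `r cosh r - sinh r` increases from `0`; `D - N = e^{-r}(e^{2r} - 1 - 2r - 2r²)/2 > 0`,
so `0 < y₀ < 1`; and `y₀(r) < r` because `(r² + 2) sinh r - 2r cosh r` increases from `0`,
which forces `y₀(r) → 0` as `r → 0⁺`.
-/

open Set Filter Real

lemma pos_of_hasDerivAt_of_map_zero {f f' : ℝ → ℝ} (hf : ∀ x, HasDerivAt f (f' x) x)
    (h0 : f 0 = 0) (hf' : ∀ x, 0 < x → 0 < f' x) {x : ℝ} (hx : 0 < x) : 0 < f x := by
  have hmono : StrictMonoOn f (Ici 0) :=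
    strictMonoOn_of_hasDerivWithinAt_pos (convex_Ici 0)
      (fun y _ => (hf y).continuousAt.continuousWithinAt)
      (fun y _ => (hf y).hasDerivWithinAt) (fun y hy => hf' y (by simpa using hy))
  simpa [h0] using hmono self_mem_Ici hx.le hx

lemma sinh_lt_mul_cosh {r : ℝ} (hr : 0 < r) : sinh r < r * cosh r := by
  have hderiv (t : ℝ) : HasDerivAt (fun t => t * cosh t - sinh t) (t * sinh t) t := by
    refine (((hasDerivAt_id t).mul (hasDerivAt_cosh t)).sub (hasDerivAt_sinh t)).congr_deriv ?_
    simp only [id_eq]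
    ring
  have := pos_of_hasDerivAt_of_map_zero hderiv (by simp)
    (fun t ht => mul_pos ht (sinh_pos_iff.2 ht)) hr
  linarith

lemma two_mul_mul_cosh_lt {r : ℝ} (hr : 0 < r) : 2 * r * cosh r < (r ^ 2 + 2) * sinh r := by
  have hderiv (t : ℝ) :
      HasDerivAt (fun t => (t ^ 2 + 2) * sinh t - 2 * t * cosh t) (t ^ 2 * cosh t) t := by
    refine ((((hasDerivAt_pow 2 t).add_const 2).mul (hasDerivAt_sinh t)).sub
      (((hasDerivAt_id t).const_mul 2).mul (hasDerivAt_cosh t))).congr_deriv ?_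
    simp only [id_eq]
    ring
  have := pos_of_hasDerivAt_of_map_zero hderiv (by simp)
    (fun t ht => mul_pos (pow_pos ht 2) (cosh_pos t)) hr
  linarith

lemma one_add_two_mul_add_two_mul_sq_lt_exp_sq {r : ℝ} (hr : 0 < r) :
    1 + 2 * r + 2 * r ^ 2 < exp r ^ 2 := by
  have h := quadratic_le_exp_of_nonneg hr.le
  nlinarith [pow_pos hr 3, pow_pos hr 4]

noncomputable def riccatiSolution (f g : ℝ → ℝ) (r : ℝ) : ℝ :=
  r * (r * g r - f r) / ((r ^ 2 + 1) * f r - r * g r)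

lemma hasDerivAt_riccatiSolution {f g : ℝ → ℝ} {r : ℝ} (hf : HasDerivAt f (g r) r)
    (hg : HasDerivAt g (f r) r) (hr : r ≠ 0) (hD : (r ^ 2 + 1) * f r - r * g r ≠ 0) :
    HasDerivAt (riccatiSolution f g)
      (1 - (1 + 2 / r ^ 2) * riccatiSolution f g r ^ 2) r := by
  have hN : HasDerivAt (fun t => t * (t * g t - f t)) (r * g r - f r + r * (r * f r)) r := by
    refine ((hasDerivAt_id r).mul (((hasDerivAt_id r).mul hg).sub hf)).congr_deriv ?_
    simp only [id_eq, Pi.sub_apply, Pi.mul_apply]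
    ring
  have hD' : HasDerivAt (fun t => (t ^ 2 + 1) * f t - t * g t) (r * f r + r ^ 2 * g r) r := by
    refine ((((hasDerivAt_pow 2 r).add_const 1).mul hf).sub
      ((hasDerivAt_id r).mul hg)).congr_deriv ?_
    simp only [id_eq]
    ring
  refine (hN.div hD' hD).congr_deriv ?_
  rw [riccatiSolution, div_pow, mul_div_assoc', one_sub_div (pow_ne_zero 2 hD)]
  field_simp
  ring

lemma riccatiSolution_sinh_cosh_num_pos {r : ℝ} (hr : 0 < r) :
    0 < r * (r * cosh r - sinh r) :=
  mul_pos hr (sub_pos.2 (sinh_lt_mul_cosh hr))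

lemma riccatiSolution_sinh_cosh_num_lt_den {r : ℝ} (hr : 0 < r) :
    r * (r * cosh r - sinh r) < (r ^ 2 + 1) * sinh r - r * cosh r := by
  have hE := one_add_two_mul_add_two_mul_sq_lt_exp_sq hr
  have hEF : exp (-r) * exp r ^ 2 = exp r := by rw [sq, ← mul_assoc, ← exp_add]; simp
  rw [sinh_eq, cosh_eq]
  nlinarith [mul_lt_mul_of_pos_left hE (exp_pos (-r))]

lemma riccatiSolution_sinh_cosh_den_pos {r : ℝ} (hr : 0 < r) :
    0 < (r ^ 2 + 1) * sinh r - r * cosh r :=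
  (riccatiSolution_sinh_cosh_num_pos hr).trans (riccatiSolution_sinh_cosh_num_lt_den hr)

lemma riccatiSolution_sinh_cosh_pos {r : ℝ} (hr : 0 < r) : 0 < riccatiSolution sinh cosh r :=
  div_pos (riccatiSolution_sinh_cosh_num_pos hr) (riccatiSolution_sinh_cosh_den_pos hr)

lemma riccatiSolution_sinh_cosh_lt_one {r : ℝ} (hr : 0 < r) : riccatiSolution sinh cosh r < 1 :=
  (div_lt_one (riccatiSolution_sinh_cosh_den_pos hr)).2 (riccatiSolution_sinh_cosh_num_lt_den hr)

lemma riccatiSolution_sinh_cosh_lt_self {r : ℝ} (hr : 0 < r) : riccatiSolution sinh cosh r < r := by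
  rw [riccatiSolution, div_lt_iff₀ (riccatiSolution_sinh_cosh_den_pos hr)]
  nlinarith [two_mul_mul_cosh_lt hr]

/-- Existence of a solution of the Riccati equation `y' = 1 - (1 + 2/r²) y²` on `(0, ∞)`,
with `0 < y < 1` there and `y(r) → 0` as `r → 0⁺`. -/
theorem riccati_solution_exists :
    ∃ y₀ : ℝ → ℝ,
      (∀ r : ℝ, 0 < r → HasDerivAt y₀ (1 - (1 + 2 / r ^ 2) * y₀ r ^ 2) r) ∧
      (∀ r : ℝ, 0 < r → 0 < y₀ r ∧ y₀ r < 1) ∧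
      Tendsto y₀ (nhdsWithin 0 (Ioi 0)) (nhds 0) := by
  refine ⟨riccatiSolution sinh cosh, fun r hr => ?_, fun r hr => ?_, ?_⟩
  · exact hasDerivAt_riccatiSolution (hasDerivAt_sinh r) (hasDerivAt_cosh r) hr.ne'
      (riccatiSolution_sinh_cosh_den_pos hr).ne'
  · exact ⟨riccatiSolution_sinh_cosh_pos hr, riccatiSolution_sinh_cosh_lt_one hr⟩
  · refine tendsto_of_tendsto_of_tendsto_of_le_of_le' tendsto_const_nhds
      (tendsto_nhdsWithin_of_tendsto_nhds tendsto_id) ?_ ?_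
    · filter_upwards [self_mem_nhdsWithin] with r hr
      exact (riccatiSolution_sinh_cosh_pos hr).le
    · filter_upwards [self_mem_nhdsWithin] with r hr
      exact (riccatiSolution_sinh_cosh_lt_self hr).le
end

section
/- The nonnegative solution of the singular Riccati equation vanishing at the origin is unique: if y₁, y₂ : (0,a) → ℝ are differentiable, satisfy yᵢ'(r) = 1 − (1 + 2/r²)·yᵢ(r)² and yᵢ(r) ≥ 0 for all r ∈ (0,a), and yᵢ(r) → 0 as r → 0⁺ for i = 1,2, then y₁ = y₂ on (0,a). -/
/-!
For `u, v ≥ 0` the right-hand side `1 - (1 + 2/r²) y²` is nonincreasing in `y`, so the squared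
distance `(y₁ - y₂)²` of two nonnegative solutions is nonincreasing in `r`. It tends to `0` as
`r → 0⁺`, hence vanishes identically.
-/

open Set Filter Topology

noncomputable def riccatiRhs (r y : ℝ) : ℝ := 1 - (1 + 2 / r ^ 2) * y ^ 2

lemma sub_mul_riccatiRhs_sub_nonpos (r : ℝ) {u v : ℝ} (hu : 0 ≤ u) (hv : 0 ≤ v) :
    (u - v) * (riccatiRhs r u - riccatiRhs r v) ≤ 0 := by
  have hfactor : (u - v) * (riccatiRhs r u - riccatiRhs r v) =
      -((1 + 2 / r ^ 2) * ((u - v) ^ 2 * (u + v))) := by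
    unfold riccatiRhs; ring
  rw [hfactor, neg_nonpos]
  positivity

lemma antitoneOn_sq_sub_of_hasDerivAt {s : Set ℝ} (hs : Convex ℝ s) {y₁ y₂ y₁' y₂' : ℝ → ℝ}
    (h₁ : ∀ r ∈ s, HasDerivAt y₁ (y₁' r) r) (h₂ : ∀ r ∈ s, HasDerivAt y₂ (y₂' r) r)
    (hmono : ∀ r ∈ s, (y₁ r - y₂ r) * (y₁' r - y₂' r) ≤ 0) :
    AntitoneOn (fun r => (y₁ r - y₂ r) ^ 2) s := by
  have hderiv : ∀ r ∈ s, HasDerivAt (fun r => (y₁ r - y₂ r) ^ 2)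
      (2 * (y₁ r - y₂ r) * (y₁' r - y₂' r)) r := fun r hr =>
    ((h₁ r hr).fun_sub (h₂ r hr)).fun_pow 2 |>.congr_deriv (by push_cast; ring)
  refine antitoneOn_of_hasDerivWithinAt_nonpos hs
    (fun r hr => (hderiv r hr).continuousAt.continuousWithinAt)
    (fun r hr => (hderiv r (interior_subset hr)).hasDerivWithinAt) fun r hr => ?_
  have := hmono r (interior_subset hr)
  linarith

lemma AntitoneOn.le_of_tendsto_nhdsGT {f : ℝ → ℝ} {a b L : ℝ} (hf : AntitoneOn f (Ioo a b))
    (hlim : Tendsto f (𝓝[>] a) (𝓝 L)) {x : ℝ} (hx : x ∈ Ioo a b) : f x ≤ L := by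
  refine ge_of_tendsto hlim ?_
  filter_upwards [Ioo_mem_nhdsGT hx.1] with t ht
  exact hf ⟨ht.1, ht.2.trans hx.2⟩ hx ht.2.le

/-- Uniqueness of the nonnegative solution, vanishing at the origin, of the singular Riccati
equation `y' = 1 - (1 + 2/r²) y²` on an interval `(0, a)`. -/
theorem riccati_solution_unique (a : ℝ) (y₁ y₂ : ℝ → ℝ)
    (h₁ : ∀ r ∈ Ioo (0 : ℝ) a, HasDerivAt y₁ (1 - (1 + 2 / r ^ 2) * y₁ r ^ 2) r)
    (h₁nn : ∀ r ∈ Ioo (0 : ℝ) a, 0 ≤ y₁ r)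
    (h₁lim : Tendsto y₁ (nhdsWithin 0 (Ioi 0)) (nhds 0))
    (h₂ : ∀ r ∈ Ioo (0 : ℝ) a, HasDerivAt y₂ (1 - (1 + 2 / r ^ 2) * y₂ r ^ 2) r)
    (h₂nn : ∀ r ∈ Ioo (0 : ℝ) a, 0 ≤ y₂ r)
    (h₂lim : Tendsto y₂ (nhdsWithin 0 (Ioi 0)) (nhds 0)) :
    EqOn y₁ y₂ (Ioo 0 a) := by
  have hanti : AntitoneOn (fun r => (y₁ r - y₂ r) ^ 2) (Ioo 0 a) :=
    antitoneOn_sq_sub_of_hasDerivAt (convex_Ioo 0 a) (y₁' := fun r => riccatiRhs r (y₁ r))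
      (y₂' := fun r => riccatiRhs r (y₂ r)) h₁ h₂
      fun r hr => sub_mul_riccatiRhs_sub_nonpos r (h₁nn r hr) (h₂nn r hr)
  have hlim : Tendsto (fun r => (y₁ r - y₂ r) ^ 2) (𝓝[>] 0) (𝓝 0) := by
    simpa using (h₁lim.sub h₂lim).pow 2
  intro r hr
  have hsq : (y₁ r - y₂ r) ^ 2 = 0 :=
    le_antisymm (hanti.le_of_tendsto_nhdsGT hlim hr) (sq_nonneg _)
  exact sub_eq_zero.mp (pow_eq_zero_iff two_ne_zero |>.mp hsq)
end

section
/- Let y₀ be the unique nonnegative solution on (0,∞) of y₀'(r) = 1 − (1 + 2/r²)·y₀(r)² with y₀(r) → 0 as r → 0⁺. Then y₀(r)/r → 1/2 as r → 0⁺ (equivalently, y₀ extends to 0 with derivative 1/2 at 0). -/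
/-!
Writing `g = y₀ / r`, the equation becomes `r g' = (1 - 2g)(1 + g) - g² r²`.
Above the line `y = r/2` one has `y₀' < 1/2`, so comparing `y₀` with the lines `r/2 + δ`
started close to `0` gives `g ≤ 1/2`. Below the level `1/2 - ε` and for `r² < 4ε` one has
`r g' > ε`, so `g` dominates the barrier `1/2 - ε + ε log (r / r₀)`, which climbs from a negative
value to `1/2 - ε` at `r₀`; hence `1/2 - ε ≤ g(r₀)`, and with `ε = r₀²/2` this squeezes `g`
between `1/2 - r₀²/2` and `1/2`.
-/

open Set Filter

theorem image_le_of_hasDerivAt_lt_hasDerivAt_boundary {f f' B B' : ℝ → ℝ} {a b : ℝ}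
    (hf : ∀ x ∈ Icc a b, HasDerivAt f (f' x) x) (hB : ∀ x ∈ Icc a b, HasDerivAt B (B' x) x)
    (ha : f a ≤ B a) (bound : ∀ x ∈ Ico a b, f x = B x → f' x < B' x) :
    ∀ ⦃x⦄, x ∈ Icc a b → f x ≤ B x :=
  image_le_of_deriv_right_lt_deriv_boundary'
    (fun x hx => (hf x hx).continuousAt.continuousWithinAt)
    (fun x hx => (hf x (Ico_subset_Icc_self hx)).hasDerivWithinAt) ha
    (fun x hx => (hB x hx).continuousAt.continuousWithinAt)
    (fun x hx => (hB x (Ico_subset_Icc_self hx)).hasDerivWithinAt) bound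

theorem riccati_le_half_mul {y : ℝ → ℝ}
    (hode : ∀ r : ℝ, 0 < r → HasDerivAt y (1 - (1 + 2 / r ^ 2) * y r ^ 2) r)
    (hlim : Tendsto y (nhdsWithin 0 (Ioi 0)) (nhds 0)) {r : ℝ} (hr : 0 < r) :
    y r ≤ r / 2 := by
  refine le_of_forall_pos_le_add fun δ hδ => ?_
  obtain ⟨a, hya, ha, har⟩ : ∃ a, y a < δ ∧ 0 < a ∧ a < r :=
    ((hlim.eventually_lt_const hδ).and (Ioo_mem_nhdsGT hr)).exists
  have hline : ∀ x, HasDerivAt (fun x => x / 2 + δ) (1 / 2) x :=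
    fun x => ((hasDerivAt_id x).div_const 2).add_const δ
  refine image_le_of_hasDerivAt_lt_hasDerivAt_boundary
    (fun x hx => hode x (ha.trans_le hx.1)) (fun x _ => hline x) (by linarith)
    (fun x hx hyx => ?_) ⟨har.le, le_rfl⟩
  have hx0 : 0 < x := ha.trans_le hx.1
  have hsteep : 1 / 2 < 2 / x ^ 2 * y x ^ 2 := by
    rw [div_mul_eq_mul_div, lt_div_iff₀ (by positivity), hyx]
    nlinarith
  nlinarith [sq_nonneg (y x)]

theorem riccati_hasDerivAt_div_self {y : ℝ → ℝ} {r : ℝ}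
    (hode : HasDerivAt y (1 - (1 + 2 / r ^ 2) * y r ^ 2) r) (hr : 0 < r) :
    HasDerivAt (fun s => y s / s)
      (((1 - 2 * (y r / r)) * (1 + y r / r) - (y r / r) ^ 2 * r ^ 2) / r) r := by
  refine (hode.div (hasDerivAt_id' r) hr.ne').congr_deriv ?_
  field_simp
  ring

theorem half_sub_le_riccati_div_self {y : ℝ → ℝ}
    (hode : ∀ r : ℝ, 0 < r → HasDerivAt y (1 - (1 + 2 / r ^ 2) * y r ^ 2) r)
    (hnn : ∀ r : ℝ, 0 < r → 0 ≤ y r) {r₀ ε : ℝ} (hr₀ : 0 < r₀) (hε : 0 < ε)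
    (hr₀ε : r₀ ^ 2 < 4 * ε) :
    1 / 2 - ε ≤ y r₀ / r₀ := by
  set a := r₀ * Real.exp (-1 / ε)
  have ha : 0 < a := by positivity
  have har₀ : a ≤ r₀ := mul_le_of_le_one_right hr₀.le 
    (Real.exp_le_one_iff.2 (div_nonpos_of_nonpos_of_nonneg (by norm_num) hε.le))
  have hlog_a : Real.log a = Real.log r₀ - 1 / ε := by
    rw [Real.log_mul hr₀.ne' (Real.exp_pos _).ne', Real.log_exp]
    ring
  have hbarrier : ∀ x, 0 < x → HasDerivAt (fun x => 1 / 2 - ε + ε * (Real.log x - Real.log r₀))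
      (ε * x⁻¹) x := fun x hx => by
    simpa using (((Real.hasDerivAt_log hx.ne').sub_const (Real.log r₀)).const_mul ε).const_add
      (1 / 2 - ε)
  have hcmp := image_le_of_hasDerivAt_lt_hasDerivAt_boundary
    (fun x hx => hbarrier x (ha.trans_le hx.1))
    (fun x hx => riccati_hasDerivAt_div_self (hode x (ha.trans_le hx.1)) (ha.trans_le hx.1))
    (by
      rw [hlog_a, mul_sub, mul_sub, mul_one_div_cancel hε.ne']
      linarith [div_nonneg (hnn a ha) ha.le])
    (fun x hx hgx => ?_) ⟨har₀, le_rfl⟩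
  · simpa using hcmp
  have hx0 : 0 < x := ha.trans_le hx.1
  -- at a contact point `g = y x / x` lies in `[0, 1/2 - ε]`, since the barrier increases to `1/2 - ε`
  set g := y x / x
  have hg_nonneg : 0 ≤ g := div_nonneg (hnn x hx0) hx0.le
  have hg_le : g ≤ 1 / 2 - ε := by
    have := mul_le_mul_of_nonneg_left (sub_nonpos.2 (Real.log_le_log hx0 hx.2.le)) hε.le
    linarith
  have hx2 : x ^ 2 < 4 * ε := by nlinarith [hx.2]
  rw [← div_eq_mul_inv]
  gcongr
  nlinarith [mul_nonneg hg_nonneg (sq_nonneg x)]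

/-- The unique nonnegative solution `y₀` of `y₀' = 1 - (1 + 2/r²) y₀²` on `(0, ∞)` with
`y₀(r) → 0` as `r → 0⁺` satisfies `y₀(r)/r → 1/2` as `r → 0⁺`. -/
theorem riccati_solution_deriv_at_zero (y₀ : ℝ → ℝ)
    (hode : ∀ r : ℝ, 0 < r → HasDerivAt y₀ (1 - (1 + 2 / r ^ 2) * y₀ r ^ 2) r)
    (hnn : ∀ r : ℝ, 0 < r → 0 ≤ y₀ r)
    (hlim : Tendsto y₀ (nhdsWithin 0 (Ioi 0)) (nhds 0)) :
    Tendsto (fun r => y₀ r / r) (nhdsWithin 0 (Ioi 0)) (nhds (1 / 2)) := by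
  have hlower : Tendsto (fun r : ℝ => 1 / 2 - r ^ 2 / 2) (nhdsWithin 0 (Ioi 0)) (nhds (1 / 2)) :=
    tendsto_nhdsWithin_of_tendsto_nhds
      ((Continuous.tendsto' (by fun_prop) 0 (1 / 2)) (by norm_num))
  refine tendsto_of_tendsto_of_tendsto_of_le_of_le' hlower tendsto_const_nhds ?_ ?_
  all_goals filter_upwards [self_mem_nhdsWithin] with r (hr : 0 < r)
  · exact half_sub_le_riccati_div_self hode hnn hr (by positivity) (by nlinarith)
  · rw [div_le_iff₀ hr]
    linarith [riccati_le_half_mul hode hlim hr]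
end

section
/- Let y₀ be the unique nonnegative solution on (0,∞) of y₀'(r) = 1 − (1 + 2/r²)·y₀(r)² with y₀(r) → 0 as r → 0⁺. Then y₀(r) < 1 for all r > 0 and y₀(r) → 1 as r → ∞. -/
/-!
On the level `y = 1` the right-hand side equals `-2/r² < 0`, so `y₀`, which starts near `0`,
can never cross `1` upwards. For `0 ≤ c < 1` and `r` so large that `2/r² ≤ (1 - c²)/2`, the
right-hand side is at least `(1 - c²)/2` whenever `0 ≤ y₀ ≤ c`: hence `y₀` climbs above `c` in
finite time and, having positive slope on the level `c`, never falls back below it.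
-/

open Set Filter Topology

theorem le_const_of_hasDerivAt_neg_at_level {f f' : ℝ → ℝ} {a b c : ℝ}
    (hf : ∀ x ∈ Icc a b, HasDerivAt f (f' x) x) (ha : f a ≤ c)
    (hneg : ∀ x ∈ Ico a b, f x = c → f' x < 0) : ∀ x ∈ Icc a b, f x ≤ c :=
  image_le_of_deriv_right_lt_deriv_boundary' (B := fun _ ↦ c) (B' := 0)
    (fun x hx ↦ (hf x hx).continuousAt.continuousWithinAt)
    (fun x hx ↦ (hf x (Ico_subset_Icc_self hx)).hasDerivWithinAt) ha continuousOn_const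
    (fun _ _ ↦ hasDerivWithinAt_const _ _ _) hneg

theorem const_le_of_hasDerivAt_pos_at_level {f f' : ℝ → ℝ} {a b c : ℝ}
    (hf : ∀ x ∈ Icc a b, HasDerivAt f (f' x) x) (ha : c ≤ f a)
    (hpos : ∀ x ∈ Ico a b, f x = c → 0 < f' x) : ∀ x ∈ Icc a b, c ≤ f x := by
  have := le_const_of_hasDerivAt_neg_at_level (f := -f) (f' := -f') (c := -c)
    (fun x hx ↦ (hf x hx).neg) (neg_le_neg ha)
    (fun x hx hx' ↦ neg_neg_of_pos (hpos x hx (neg_inj.1 hx')))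
  exact fun x hx ↦ neg_le_neg_iff.1 (this x hx)

theorem lt_const_of_eventually_lt_of_hasDerivAt_neg_at_level {f f' : ℝ → ℝ} {a c : ℝ}
    (hf : ∀ x, a < x → HasDerivAt f (f' x) x) (hstart : ∀ᶠ x in 𝓝[>] a, f x < c)
    (hneg : ∀ x, a < x → f x = c → f' x < 0) : ∀ x, a < x → f x < c := by
  have hle : ∀ x, a < x → f x ≤ c := fun x hx ↦ by
    obtain ⟨b, hb, hab, hbx⟩ := (hstart.and (Ioo_mem_nhdsGT hx)).exists
    exact le_const_of_hasDerivAt_neg_at_level (fun y hy ↦ hf y (hab.trans_le hy.1)) hb.le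
      (fun y hy ↦ hneg y (hab.trans_le hy.1)) x ⟨hbx.le, le_rfl⟩
  intro x hx
  refine (hle x hx).lt_of_ne fun hxc ↦ (hneg x hx hxc).ne ?_
  have hmax : IsLocalMax f x :=
    Filter.mem_of_superset (Ioi_mem_nhds hx) fun y hy ↦ hxc ▸ hle y hy
  exact hmax.hasDerivAt_eq_zero (hf x hx)

theorem exists_const_le_of_hasDerivAt_ge {f f' : ℝ → ℝ} {a c δ : ℝ} (hδ : 0 < δ)
    (hf : ∀ x, a ≤ x → HasDerivAt f (f' x) x) (hbound : ∀ x, a ≤ x → f x < c → δ ≤ f' x) :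
    ∃ x, a ≤ x ∧ c ≤ f x := by
  by_contra! hlt
  set b := a + (c - f a) / δ
  have hab : a ≤ b := le_add_of_nonneg_right (div_nonneg (sub_nonneg.2 (hlt a le_rfl).le) hδ.le)
  have hgrowth := image_le_of_deriv_right_le_deriv_boundary (a := a) (b := b)
    (f := fun x ↦ f a + δ * (x - a)) (f' := fun _ ↦ δ) (B := f) (B' := f') (by fun_prop)
    (fun x _ ↦ by
      simpa using (((hasDerivAt_id x).sub_const a).const_mul δ).const_add (f a) |>.hasDerivWithinAt)
    (by simp) (fun x hx ↦ (hf x hx.1).continuousAt.continuousWithinAt)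
    (fun x hx ↦ (hf x hx.1).hasDerivWithinAt) (fun x hx ↦ hbound x hx.1 (hlt x hx.1))
    ⟨hab, le_rfl⟩
  have hb : f a + δ * (b - a) = c := by simp only [b]; field_simp; ring
  exact (hlt b hab).not_ge (hb ▸ hgrowth)

theorem eventually_const_le_of_hasDerivAt_ge {f f' : ℝ → ℝ} {c δ : ℝ} (hδ : 0 < δ)
    (hf : ∀ᶠ x in atTop, HasDerivAt f (f' x) x)
    (hbound : ∀ᶠ x in atTop, f x ≤ c → δ ≤ f' x) : ∀ᶠ x in atTop, c ≤ f x := by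
  obtain ⟨a, ha⟩ := eventually_atTop.1 (hf.and hbound)
  obtain ⟨x₀, hax₀, hx₀⟩ := exists_const_le_of_hasDerivAt_ge hδ (fun x hx ↦ (ha x hx).1)
    fun x hx hfx ↦ (ha x hx).2 hfx.le
  refine eventually_atTop.2 ⟨x₀, fun x hx ↦ ?_⟩
  exact const_le_of_hasDerivAt_pos_at_level (fun y hy ↦ (ha y (hax₀.trans hy.1)).1) hx₀
    (fun y hy hyc ↦ hδ.trans_le ((ha y (hax₀.trans hy.1)).2 hyc.le)) x ⟨hx, le_rfl⟩

theorem riccati_rhs_eventually_ge {c : ℝ} (hc₀ : 0 ≤ c) (hc₁ : c < 1) :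
    ∀ᶠ r : ℝ in atTop, ∀ y, 0 ≤ y → y ≤ c → (1 - c ^ 2) / 2 ≤ 1 - (1 + 2 / r ^ 2) * y ^ 2 := by
  have hdecay : Tendsto (fun r : ℝ ↦ 2 / r ^ 2) atTop (𝓝 0) :=
    tendsto_const_nhds.div_atTop (tendsto_pow_atTop two_ne_zero)
  filter_upwards [hdecay.eventually_le_const (by nlinarith : (0 : ℝ) < (1 - c ^ 2) / 2),
    eventually_gt_atTop 0] with r hr hr₀ y hy₀ hyc
  have hy : y ^ 2 ≤ c ^ 2 := pow_le_pow_left₀ hy₀ hyc 2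
  have : 0 ≤ 2 / r ^ 2 := by positivity
  nlinarith

/-- The unique nonnegative solution `y₀` of `y₀' = 1 - (1 + 2/r²) y₀²` on `(0, ∞)` with
`y₀(r) → 0` as `r → 0⁺` satisfies `y₀(r) < 1` for all `r > 0` and `y₀(r) → 1` as `r → ∞`. -/
theorem riccati_solution_lt_one_tendsto_one (y₀ : ℝ → ℝ)
    (hode : ∀ r : ℝ, 0 < r → HasDerivAt y₀ (1 - (1 + 2 / r ^ 2) * y₀ r ^ 2) r)
    (hnn : ∀ r : ℝ, 0 < r → 0 ≤ y₀ r)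
    (hlim : Tendsto y₀ (nhdsWithin 0 (Ioi 0)) (nhds 0)) :
    (∀ r : ℝ, 0 < r → y₀ r < 1) ∧ Tendsto y₀ atTop (nhds 1) := by
  have hlt : ∀ r : ℝ, 0 < r → y₀ r < 1 :=
    lt_const_of_eventually_lt_of_hasDerivAt_neg_at_level hode (hlim.eventually_lt_const one_pos)
      fun r hr hy ↦ by rw [hy]; linarith [show (0 : ℝ) < 2 / r ^ 2 by positivity]
  refine ⟨hlt, tendsto_order.2 ⟨fun b hb ↦ ?_, fun b hb ↦ ?_⟩⟩
  · obtain ⟨c, hbc, hc₁⟩ := exists_between (max_lt hb one_pos)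
    have hc₀ : 0 ≤ c := (le_max_right _ _).trans hbc.le
    have hge := eventually_const_le_of_hasDerivAt_ge (by nlinarith : (0 : ℝ) < (1 - c ^ 2) / 2)
      ((eventually_gt_atTop 0).mono hode)
      (((riccati_rhs_eventually_ge hc₀ hc₁).and (eventually_gt_atTop 0)).mono
        fun r h hyc ↦ h.1 _ (hnn r h.2) hyc)
    filter_upwards [hge] with r hr using ((le_max_left _ _).trans_lt hbc).trans_le hr
  · filter_upwards [eventually_gt_atTop 0] with r hr using (hlt r hr).trans hb
end

section
/- Let y₀ be the unique nonnegative solution on (0,∞) of y₀'(r) = 1 − (1 + 2/r²)·y₀(r)² with y₀(r) → 0 as r → 0⁺. Then y₀'(r) > 0 for all r > 0; in particular y₀ is strictly increasing and maps (0,∞) bijectively onto (0,1). -/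
/-!
Write `F r = (1 + 2 / r²) y₀(r)²`, so that the equation reads `y₀' = 1 - F`. At a point where
`F = 1` the equation kills the `y₀'` term in `F'`, leaving `F' = -(4 / r³) y₀² < 0`; so `F` can
cross the level `1` only downwards. If `F(r₀) ≥ 1` somewhere, then `F ≥ 1` on all of `(0, r₀]`,
where `y₀` is therefore nonincreasing and stays at least `y₀(r₀) > 0`, contradicting
`y₀(0⁺) = 0`. Hence `F < 1`, i.e. `y₀' > 0` and `y₀ < 1`. If `y₀` stayed below some `v < 1`,
then `y₀' ≥ (1 - v²) / 2` for large `r` and `y₀` would be unbounded; so `y₀` sweeps out `(0, 1)`.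
-/

open Set Filter Topology

theorem const_le_image_of_deriv_neg_boundary {f f' : ℝ → ℝ} {a b c : ℝ}
    (hf : ∀ x ∈ Ioc a b, HasDerivAt f (f' x) x) (hb : c ≤ f b)
    (bound : ∀ x ∈ Ioc a b, f x = c → f' x < 0) : ∀ x ∈ Ioc a b, c ≤ f x := by
  intro x hx
  -- reflect `[x, b]` to `[-b, -x]` and apply the forward fencing theorem to `s ↦ f (-s)`
  have hg : ∀ s ∈ Icc (-b) (-x), HasDerivAt (fun s ↦ f (-s)) (-f' (-s)) s := fun s hs ↦
    ((hf (-s) ⟨by linarith [hx.1, hs.2], by linarith [hs.1]⟩).scomp s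
      (hasDerivAt_neg s)).congr_deriv (neg_one_smul ℝ _)
  have key := image_le_of_deriv_right_lt_deriv_boundary' (f := fun _ ↦ c) (f' := fun _ ↦ 0)
    continuousOn_const (fun _ _ ↦ hasDerivWithinAt_const _ _ c) (by simpa using hb)
    (fun s hs ↦ (hg s hs).continuousAt.continuousWithinAt)
    (fun s hs ↦ (hg s (Ico_subset_Icc_self hs)).hasDerivWithinAt)
    (fun s hs hcs ↦ neg_pos.2 <| bound (-s) ⟨by linarith [hx.1, hs.2], by linarith [hs.1]⟩
      hcs.symm) (right_mem_Icc.2 (neg_le_neg hx.2))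
  simpa using key

section Riccati

variable {y : ℝ → ℝ}

theorem riccati_hasDerivAt_weighted_sq
    (hode : ∀ r : ℝ, 0 < r → HasDerivAt y (1 - (1 + 2 / r ^ 2) * y r ^ 2) r) {r : ℝ}
    (hr : 0 < r) :
    HasDerivAt (fun t ↦ (1 + 2 / t ^ 2) * y t ^ 2)
      (-4 / r ^ 3 * y r ^ 2 + (1 + 2 / r ^ 2) * (2 * y r * (1 - (1 + 2 / r ^ 2) * y r ^ 2)))
      r := by
  have hweight : HasDerivAt (fun t : ℝ ↦ 1 + 2 / t ^ 2) (-4 / r ^ 3) r := by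
    refine (((hasDerivAt_const r (2 : ℝ)).div (hasDerivAt_pow 2 r) (by positivity)).const_add
      1).congr_deriv ?_
    field_simp
    ring
  refine (hweight.mul ((hode r hr).pow 2)).congr_deriv ?_
  simp only [Pi.pow_apply]
  push_cast
  ring

theorem riccati_weighted_sq_ge_one_of_le
    (hode : ∀ r : ℝ, 0 < r → HasDerivAt y (1 - (1 + 2 / r ^ 2) * y r ^ 2) r) {r t : ℝ}
    (ht : 0 < t) (htr : t ≤ r) (hr : 1 ≤ (1 + 2 / r ^ 2) * y r ^ 2) :
    1 ≤ (1 + 2 / t ^ 2) * y t ^ 2 := by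
  refine const_le_image_of_deriv_neg_boundary (fun x hx ↦ riccati_hasDerivAt_weighted_sq hode hx.1)
    hr (fun x hx hx1 ↦ ?_) t ⟨ht, htr⟩
  have hyx : y x ≠ 0 := by rintro h0; simp [h0] at hx1
  have hx0 := hx.1
  rw [hx1, sub_self, mul_zero, mul_zero, add_zero]
  exact mul_neg_of_neg_of_pos (div_neg_of_neg_of_pos (by norm_num) (by positivity))
    (by positivity)

theorem riccati_weighted_sq_lt_one
    (hode : ∀ r : ℝ, 0 < r → HasDerivAt y (1 - (1 + 2 / r ^ 2) * y r ^ 2) r)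
    (hnn : ∀ r : ℝ, 0 < r → 0 ≤ y r) (hlim : Tendsto y (𝓝[>] 0) (𝓝 0)) {r : ℝ} (hr : 0 < r) :
    (1 + 2 / r ^ 2) * y r ^ 2 < 1 := by
  by_contra! h
  have hanti : AntitoneOn y (Ioc 0 r) := by
    refine antitoneOn_of_hasDerivWithinAt_nonpos (convex_Ioc 0 r)
      (fun x hx ↦ (hode x hx.1).continuousAt.continuousWithinAt)
      (fun x hx ↦ (hode x (interior_subset hx).1).hasDerivWithinAt) (fun x hx ↦ ?_)
    obtain ⟨hx0, hxr⟩ := interior_subset hx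
    exact sub_nonpos.2 (riccati_weighted_sq_ge_one_of_le hode hx0 hxr h)
  have hpos : 0 < y r := (hnn r hr).lt_of_ne' fun h0 ↦ by norm_num [h0] at h
  obtain ⟨t, hyt, htr⟩ := ((hlim.eventually_lt_const hpos).and (Ioc_mem_nhdsGT hr)).exists
  exact (hyt.trans_le (hanti htr ⟨hr, le_rfl⟩ htr.2)).false

theorem riccati_exists_gt_of_lt_one
    (hode : ∀ r : ℝ, 0 < r → HasDerivAt y (1 - (1 + 2 / r ^ 2) * y r ^ 2) r)
    (hnn : ∀ r : ℝ, 0 < r → 0 ≤ y r) {v : ℝ} (hv : v < 1) : ∃ b, 0 < b ∧ v < y b := by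
  by_contra! hle
  have hv0 : 0 ≤ v := (hnn 1 one_pos).trans (hle 1 one_pos)
  set ε := (1 - v ^ 2) / 2 with hε_def
  have hε : 0 < ε := by nlinarith
  have hweight : Tendsto (fun r : ℝ ↦ 2 / r ^ 2) atTop (𝓝 0) :=
    tendsto_const_nhds.div_atTop (tendsto_pow_atTop two_ne_zero)
  obtain ⟨R, hR⟩ := eventually_atTop.1
    ((hweight.eventually (ge_mem_nhds hε)).and (eventually_gt_atTop 0))
  have hslope : ∀ r, R ≤ r → ε ≤ 1 - (1 + 2 / r ^ 2) * y r ^ 2 := fun r hr ↦ by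
    obtain ⟨hwr, hr0⟩ := hR r hr
    have hy2 : y r ^ 2 ≤ v ^ 2 := pow_le_pow_left₀ (hnn r hr0) (hle r hr0) 2
    nlinarith [sq_nonneg (y r)]
  have hR0 : 0 < R := (hR R le_rfl).2
  obtain ⟨c, hc, hmvt⟩ := exists_hasDerivAt_eq_slope y _ (lt_add_of_pos_right R (inv_pos.2 hε))
    (fun x hx ↦ (hode x (hR0.trans_le hx.1)).continuousAt.continuousWithinAt)
    (fun x hx ↦ hode x (hR0.trans hx.1))
  have hgain : 1 ≤ y (R + ε⁻¹) - y R := by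
    have := hslope c hc.1.le
    rw [hmvt, add_sub_cancel_left, div_inv_eq_mul] at this
    nlinarith
  linarith [hnn R hR0, hle (R + ε⁻¹) (by positivity)]

end Riccati

/-- The unique nonnegative solution `y₀` of `y₀' = 1 - (1 + 2/r²) y₀²` on `(0, ∞)` with
`y₀(r) → 0` as `r → 0⁺` has positive derivative on `(0, ∞)`; in particular it is strictly
increasing and maps `(0, ∞)` bijectively onto `(0, 1)`. -/
theorem riccati_solution_strict_mono_bijective (y₀ : ℝ → ℝ)
    (hode : ∀ r : ℝ, 0 < r → HasDerivAt y₀ (1 - (1 + 2 / r ^ 2) * y₀ r ^ 2) r)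
    (hnn : ∀ r : ℝ, 0 < r → 0 ≤ y₀ r)
    (hlim : Tendsto y₀ (nhdsWithin 0 (Ioi 0)) (nhds 0)) :
    (∀ r : ℝ, 0 < r → 0 < deriv y₀ r) ∧
    StrictMonoOn y₀ (Ioi 0) ∧
    BijOn y₀ (Ioi 0) (Ioo 0 1) := by
  have hF r (hr : 0 < r) := riccati_weighted_sq_lt_one hode hnn hlim hr
  have hderiv : ∀ r : ℝ, 0 < r → 0 < deriv y₀ r := fun r hr ↦ by
    rw [(hode r hr).deriv]; linarith [hF r hr]
  have hcont : ContinuousOn y₀ (Ioi 0) := fun r hr ↦ (hode r hr).continuousAt.continuousWithinAt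
  have hmono : StrictMonoOn y₀ (Ioi 0) :=
    strictMonoOn_of_deriv_pos (convex_Ioi 0) hcont (by rwa [interior_Ioi])
  refine ⟨hderiv, hmono, fun r (hr : 0 < r) ↦ ⟨?_, ?_⟩, hmono.injOn, fun v hv ↦ ?_⟩
  · exact (hnn (r / 2) (half_pos hr)).trans_lt
      (hmono (half_pos hr) hr (half_lt_self hr))
  · refine (sq_lt_one_iff₀ (hnn r hr)).1 (lt_of_le_of_lt ?_ (hF r hr))
    exact le_mul_of_one_le_left (sq_nonneg _) (le_add_of_nonneg_right (by positivity))
  · obtain ⟨a, hav, ha⟩ := ((hlim.eventually_lt_const hv.1).and self_mem_nhdsWithin).exists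
    obtain ⟨b, hb, hvb⟩ := riccati_exists_gt_of_lt_one hode hnn hv.2
    have hab : uIcc a b ⊆ Ioi 0 := ordConnected_Ioi.uIcc_subset ha hb
    obtain ⟨c, hc, rfl⟩ := intermediate_value_uIcc (hcont.mono hab) (mem_uIcc_of_le hav.le hvb.le)
    exact ⟨c, hab hc, rfl⟩
end

section
/- Comparison with the Riccati equation: let R > 0 and let y : (0,R] → ℝ be differentiable with y(r) > 0 for all r ∈ (0,R], y(r) → 0 as r → 0⁺, and y'(r) ≥ 1 − (1 + 2/r²)·y(r)² for all r ∈ (0,R]. Then y(r) ≥ y₀(r) for all r ∈ (0,R], where y₀ is the unique nonnegative solution of y₀'(r) = 1 − (1 + 2/r²)·y₀(r)² with y₀(r) → 0 as r → 0⁺. -/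
open Set Filter Topology

/- The Riccati right-hand side `1 - (1 + 2/r²) u²` is strictly decreasing in `u ≥ 0`, so wherever
`y₀ > y > 0` the derivative of `y₀` is strictly smaller than that of `y`. Hence for each `ε > 0`,
once `y₀ - y < ε` near `0⁺`, the graph of `y₀` can never cross the barrier `y + ε`. -/

theorem le_of_tendsto_sub_of_hasDerivAt_lt_of_lt {f f' g g' : ℝ → ℝ} {a b : ℝ} (hab : a < b)
    (hf : ∀ x ∈ Ioc a b, HasDerivAt f (f' x) x) (hg : ∀ x ∈ Ioc a b, HasDerivAt g (g' x) x)
    (hlim : Tendsto (fun x => f x - g x) (𝓝[>] a) (𝓝 0))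
    (hderiv : ∀ x ∈ Ioo a b, g x < f x → f' x < g' x) :
    f b ≤ g b := by
  refine le_of_forall_pos_le_add fun ε hε => ?_
  obtain ⟨c, hc, hfgc⟩ : ∃ c ∈ Ioo a b, f c - g c < ε :=
    (Eventually.and (Ioo_mem_nhdsGT hab) (hlim.eventually (gt_mem_nhds hε))).exists
  have hsub : Icc c b ⊆ Ioc a b := Icc_subset_Ioc hc.1 le_rfl
  have hf_cont : ContinuousOn f (Icc c b) := fun x hx =>
    (hf x (hsub hx)).continuousAt.continuousWithinAt
  have hg_cont : ContinuousOn (fun x => g x + ε) (Icc c b) := fun x hx =>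
    ((hg x (hsub hx)).continuousAt.add continuousAt_const).continuousWithinAt
  refine image_le_of_deriv_right_lt_deriv_boundary' hf_cont
    (fun x hx => (hf x (hsub (Ico_subset_Icc_self hx))).hasDerivWithinAt) (by linarith)
    hg_cont (fun x hx => ((hg x (hsub (Ico_subset_Icc_self hx))).add_const ε).hasDerivWithinAt)
    (fun x hx hfx => hderiv x ⟨hc.1.trans_le hx.1, hx.2⟩ (by linarith)) ⟨hc.2.le, le_rfl⟩

theorem riccati_rhs_lt_of_lt {r u v : ℝ} (hu : 0 ≤ u) (huv : u < v) :
    1 - (1 + 2 / r ^ 2) * v ^ 2 < 1 - (1 + 2 / r ^ 2) * u ^ 2 := by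
  have hcoeff : 0 < 1 + 2 / r ^ 2 := by positivity
  have hsq : u ^ 2 < v ^ 2 := pow_lt_pow_left₀ huv hu two_ne_zero
  nlinarith

theorem riccati_comparison_general (R : ℝ)
    (y₀ : ℝ → ℝ)
    (hode : ∀ r : ℝ, 0 < r → HasDerivAt y₀ (1 - (1 + 2 / r ^ 2) * y₀ r ^ 2) r)
    (hlim : Tendsto y₀ (nhdsWithin 0 (Ioi 0)) (nhds 0))
    (y y' : ℝ → ℝ)
    (hy : ∀ r ∈ Ioc (0 : ℝ) R, HasDerivAt y (y' r) r)
    (hypos : ∀ r ∈ Ioc (0 : ℝ) R, 0 < y r)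
    (hylim : Tendsto y (nhdsWithin 0 (Ioi 0)) (nhds 0))
    (hineq : ∀ r ∈ Ioc (0 : ℝ) R, 1 - (1 + 2 / r ^ 2) * y r ^ 2 ≤ y' r) :
    ∀ r ∈ Ioc (0 : ℝ) R, y₀ r ≤ y r := by
  intro r hr
  have hsub : Ioc 0 r ⊆ Ioc 0 R := Ioc_subset_Ioc_right hr.2
  refine le_of_tendsto_sub_of_hasDerivAt_lt_of_lt hr.1 (fun x hx => hode x hx.1)
    (fun x hx => hy x (hsub hx)) (by simpa using hlim.sub hylim) fun x hx hlt => ?_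
  have hxR : x ∈ Ioc 0 R := hsub (Ioo_subset_Ioc_self hx)
  calc 1 - (1 + 2 / x ^ 2) * y₀ x ^ 2 < 1 - (1 + 2 / x ^ 2) * y x ^ 2 :=
        riccati_rhs_lt_of_lt (hypos x hxR).le hlt
    _ ≤ y' x := hineq x hxR

/-- Comparison with the Riccati equation: a positive function `y` on `(0, R]` vanishing at `0⁺`
and satisfying the differential inequality `y' ≥ 1 - (1 + 2/r²) y²` dominates the solution `y₀`
of the corresponding Riccati equation vanishing at `0⁺`. -/
theorem riccati_comparison (R : ℝ) (hR : 0 < R)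
    (y₀ : ℝ → ℝ)
    (hode : ∀ r : ℝ, 0 < r → HasDerivAt y₀ (1 - (1 + 2 / r ^ 2) * y₀ r ^ 2) r)
    (hnn : ∀ r : ℝ, 0 < r → 0 ≤ y₀ r)
    (hlim : Tendsto y₀ (nhdsWithin 0 (Ioi 0)) (nhds 0))
    (y y' : ℝ → ℝ)
    (hy : ∀ r ∈ Ioc (0 : ℝ) R, HasDerivAt y (y' r) r)
    (hypos : ∀ r ∈ Ioc (0 : ℝ) R, 0 < y r)
    (hylim : Tendsto y (nhdsWithin 0 (Ioi 0)) (nhds 0))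
    (hineq : ∀ r ∈ Ioc (0 : ℝ) R, 1 - (1 + 2 / r ^ 2) * y r ^ 2 ≤ y' r) :
    ∀ r ∈ Ioc (0 : ℝ) R, y₀ r ≤ y r :=
  riccati_comparison_general R y₀ hode hlim y y' hy hypos hylim hineq
end
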